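/- Let R be a *-regular ring which is complete with respect to a rank function N. Then R satisfies LP ~ RP (that is, LP(x) is *-equivalent to RP(x) for every x in R; equivalently, any two equivalent projections of R are *-equivalent) if and only if for all equivalent projections p, q in R and every eps > 0 there exist projections p' <= p and q' <= q such that p' is *-equivalent to q', N(p - p') < eps, and N(q - q') < eps. -/

import Mathlib

open scoped TensorProduct Kronecker

noncomputable section

namespace AraClaramunt

/-! ### Pseudo-rank functions and rank metric notions -/

/-- A pseudo-rank function on a unital ring. -/
structure IsPseudoRankFunction {R : Type*} [Ring R] (N : R → ℝ) : Prop where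
  nonneg : ∀ x : R, 0 ≤ N x
  le_one : ∀ x : R, N x ≤ 1
  map_one : N 1 = 1
  subadditive : ∀ a b : R, N (a + b) ≤ N a + N b
  mul_le_left : ∀ a b : R, N (a * b) ≤ N a
  mul_le_right : ∀ a b : R, N (a * b) ≤ N b
  add_of_orthogonal : ∀ e f : R, IsIdempotentElem e → IsIdempotentElem f →
    e * f = 0 → f * e = 0 → N (e + f) = N e + N f

/-- A rank function is a faithful pseudo-rank function. -/
def IsRankFunction {R : Type*} [Ring R] (N : R → ℝ) : Prop :=
  IsPseudoRankFunction N ∧ ∀ x : R, N x = 0 → x = 0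

/-- Cauchy sequence for the pseudo-metric `d(x,y) = N (x - y)`. -/
def RankCauchy {R : Type*} [Ring R] (N : R → ℝ) (u : ℕ → R) : Prop :=
  ∀ ε : ℝ, 0 < ε → ∃ n₀ : ℕ, ∀ m n : ℕ, n₀ ≤ m → n₀ ≤ n → N (u m - u n) < ε

/-- Convergence for the pseudo-metric `d(x,y) = N (x - y)`. -/
def RankTendsto {R : Type*} [Ring R] (N : R → ℝ) (u : ℕ → R) (x : R) : Prop :=
  ∀ ε : ℝ, 0 < ε → ∃ n₀ : ℕ, ∀ n : ℕ, n₀ ≤ n → N (u n - x) < ε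

/-- Completeness with respect to the pseudo-metric `d(x,y) = N (x - y)`. -/
def RankComplete {R : Type*} [Ring R] (N : R → ℝ) : Prop :=
  ∀ u : ℕ → R, RankCauchy N u → ∃ x : R, RankTendsto N u x

/-- Density of a subset with respect to the pseudo-metric `d(x,y) = N (x - y)`. -/
def RankDense {R : Type*} [Ring R] (N : R → ℝ) (S : Set R) : Prop :=
  ∀ x : R, ∀ ε : ℝ, 0 < ε → ∃ y ∈ S, N (x - y) < ε

/-- von Neumann regularity. -/
def VNRegular (R : Type*) [Ring R] : Prop :=
  ∀ x : R, ∃ y : R, x = x * y * x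

/-- A continuous factor: a simple, von Neumann regular, right and left self-injective ring
admitting a rank function whose image is all of `[0,1]`. -/
def IsContinuousFactor (R : Type*) [Ring R] : Prop :=
  IsSimpleRing R ∧ VNRegular R ∧ Module.Injective R R ∧ Module.Injective Rᵐᵒᵖ Rᵐᵒᵖ ∧
    ∃ N : R → ℝ, IsRankFunction N ∧ Set.range N = Set.Icc (0 : ℝ) 1

/-- An extremal pseudo-rank function: an extreme point of the convex set of all
pseudo-rank functions. -/
def IsExtremalPseudoRankFunction {R : Type*} [Ring R] (N : R → ℝ) : Prop :=
  N ∈ Set.extremePoints ℝ {S : R → ℝ | IsPseudoRankFunction S}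

/-! ### Matricial and ultramatricial algebras -/

/-- A matricial `K`-algebra. -/
def IsMatricialAlgebra (K : Type*) [Field K] (A : Type*) [Ring A] [Algebra K A] : Prop :=
  ∃ (k : ℕ) (n : Fin (k + 1) → ℕ), (∀ i, 0 < n i) ∧
    Nonempty (A ≃ₐ[K] ((i : Fin (k + 1)) → Matrix (Fin (n i)) (Fin (n i)) K))

/-- An ultramatricial `K`-algebra: the increasing union of matricial subalgebras. -/
def IsUltramatricialAlgebra (K : Type*) [Field K] (B : Type*) [Ring B] [Algebra K B] : Prop :=
  ∃ C : ℕ → Subalgebra K B, (∀ n, C n ≤ C (n + 1)) ∧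
    (∀ n, IsMatricialAlgebra K (C n)) ∧ (∀ b : B, ∃ n, b ∈ C n)

/-- `Q`, with rank function `N`, is the rank-metric completion of a direct limit of the matrix
algebras `M_{p n}(K)`: it is complete and carries a dense increasing tower of unital subalgebras
isomorphic to `M_{p n}(K)`. -/
def IsMatrixTowerCompletion (K : Type*) [Field K] (Q : Type*) [Ring Q] [Algebra K Q]
    (N : Q → ℝ) (p : ℕ → ℕ) : Prop :=
  IsRankFunction N ∧ RankComplete N ∧
    ∃ A : ℕ → Subalgebra K Q, (∀ n, A n ≤ A (n + 1)) ∧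
      (∀ n, Nonempty ((A n) ≃ₐ[K] Matrix (Fin (p n)) (Fin (p n)) K)) ∧
      RankDense N (⋃ n, (A n : Set Q))

/-- `Q` is (a copy of) von Neumann's continuous factor `M_K`, the completion of
`lim_n M_{2^n}(K)` with respect to its unique rank function. -/
def IsMK (K : Type*) [Field K] (Q : Type*) [Ring Q] [Algebra K Q] (N : Q → ℝ) : Prop :=
  IsMatrixTowerCompletion K Q N (fun n => 2 ^ n)

/-- The canonical block-diagonal unital embedding `M_a(K) → M_b(K)`, `z ↦ z ⊗ 1_g`,
where `b = a * g`. -/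
def blockEmbedFun (K : Type*) [Semiring K] {a : ℕ} (g b : ℕ) (h : a * g = b)
    (z : Matrix (Fin a) (Fin a) K) : Matrix (Fin b) (Fin b) K :=
  Matrix.reindex (finProdFinEquiv.trans (finCongr h)) (finProdFinEquiv.trans (finCongr h))
    (z ⊗ₖ (1 : Matrix (Fin g) (Fin g) K))

end AraClaramunt
namespace AraClaramunt

/-! ### Star notions -/

/-- Properness of an involution: `x* x = 0` implies `x = 0`. -/
def ProperStar (R : Type*) [NonUnitalNonAssocRing R] [Star R] : Prop :=
  ∀ x : R, star x * x = 0 → x = 0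

/-- A projection: a self-adjoint idempotent. -/
def IsProjection {R : Type*} [Mul R] [Star R] (p : R) : Prop :=
  star p = p ∧ p * p = p

/-- The order on projections: `q ≤ p` iff `p q = q p = q`. -/
def ProjLE {R : Type*} [Mul R] (q p : R) : Prop :=
  p * q = q ∧ q * p = q

/-- `*`-equivalence of projections: `e = w w*` and `f = w* w` for some `w`. -/
def StarEquivProj {R : Type*} [Mul R] [Star R] (e f : R) : Prop :=
  ∃ w : R, e = w * star w ∧ f = star w * w

/-- Equivalence of projections: `e = x y`, `f = y x` with `x ∈ eRf`, `y ∈ fRe`. -/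
def EquivProj {R : Type*} [Mul R] (e f : R) : Prop :=
  ∃ x y : R, x = e * x * f ∧ y = f * y * e ∧ e = x * y ∧ f = y * x

/-- `y` is the relative inverse of `x` in a `*`-regular ring. -/
def IsRelativeInverse {R : Type*} [Mul R] [Star R] (x y : R) : Prop :=
  x * y * x = x ∧ y * x * y = y ∧ star (x * y) = x * y ∧ star (y * x) = y * x

/-- `e = LP(x)`: `e` is a projection with `x R = e R`. -/
def IsLeftProjOf {R : Type*} [Mul R] [Star R] (x e : R) : Prop :=
  IsProjection e ∧ e * x = x ∧ ∃ y : R, e = x * y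

/-- `f = RP(x)`: `f` is a projection with `R x = R f`. -/
def IsRightProjOf {R : Type*} [Mul R] [Star R] (x f : R) : Prop :=
  IsProjection f ∧ x * f = x ∧ ∃ y : R, f = y * x

/-- Positive definiteness of the involution of a field. -/
def PosDefStar (F : Type*) [Field F] [StarRing F] : Prop :=
  ∀ (n : ℕ) (x : Fin n → F), (∑ i, star (x i) * x i) = 0 → ∀ i, x i = 0

/-- `*`-Pythagorean field. -/
def StarPythagorean (F : Type*) [Field F] [StarRing F] : Prop :=
  ∀ x y : F, ∃ z : F, x * star x + y * star y = z * star z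

/-- A standard matricial `*`-algebra over `(F, *)`: a `*`-algebra `*`-isomorphic to a finite
product of matrix algebras `M_{n i}(F)` with the `*`-transpose involution. -/
def IsStandardMatricialStarAlgebra (F : Type*) [Field F] [StarRing F]
    (A : Type*) [Ring A] [Algebra F A] [StarRing A] [StarModule F A] : Prop :=
  ∃ (k : ℕ) (n : Fin (k + 1) → ℕ), (∀ i, 0 < n i) ∧
    Nonempty (A ≃⋆ₐ[F] ((i : Fin (k + 1)) → Matrix (Fin (n i)) (Fin (n i)) F))

/-- A map `M_a(F) → M_b(F)` is standard (up to a permutation of the index set) if it is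
`z ↦ diag(z, …, z)` (multiplicity `t`), suitably reindexed. -/
def IsStandardMatrixMap (F : Type*) [Field F] {a b : ℕ}
    (Φ : Matrix (Fin a) (Fin a) F → Matrix (Fin b) (Fin b) F) : Prop :=
  ∃ (t : ℕ) (E : Fin a × Fin t ≃ Fin b),
    ∀ z, Φ z = Matrix.reindex E E (Matrix.blockDiagonal fun _ : Fin t => z)

/-- A map between finite products of matrix algebras over `F` is standard (block diagonal,
up to a permutation of the index sets): it is determined by multiplicities `t j i`, the `j`-th
component being the block-diagonal sum of `t j i` copies of the `i`-th component of the input. -/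
def IsStandardBlockMap (F : Type*) [Field F] {k l : ℕ} (n : Fin (k + 1) → ℕ)
    (m : Fin (l + 1) → ℕ)
    (Φ : ((i : Fin (k + 1)) → Matrix (Fin (n i)) (Fin (n i)) F) →
      ((j : Fin (l + 1)) → Matrix (Fin (m j)) (Fin (m j)) F)) : Prop :=
  ∃ t : Fin (l + 1) → Fin (k + 1) → ℕ,
    ∃ E : (j : Fin (l + 1)) →
      ((Σ c : (Σ i : Fin (k + 1), Fin (t j i)), Fin (n c.1)) ≃ Fin (m j)),
      ∀ z j, Φ z j =
        Matrix.reindex (E j) (E j)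
          (Matrix.blockDiagonal' fun c : (Σ i : Fin (k + 1), Fin (t j i)) => z c.1)

end AraClaramunt

/-!
The forward direction is immediate, since `p ∼ q` via `x` means `p = LP(x)` and `q = RP(x)`.
Conversely `LP(x) ∼ RP(x)` always holds, so it suffices to show that equivalent projections
`p ∼ q` are `*`-equivalent.

Completeness gives a maximal partial isometry `W` with `WW* ≤ p`, `W*W ≤ q`: build `W` greedily,
each step adding a partial isometry below `p - WW*`, `q - W*W` of at least half the largest
possible rank. The ranks of the `WW*` increase and are at most `1`, so the sequence is Cauchy and
the ranks of the steps tend to `0`; hence nothing nonzero fits below `p - WW*`, `q - W*W` for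
the limit `W`.

If `r = p - WW* ≠ 0` then `r R (q - W*W) ≠ 0`. Otherwise `y` maps every `f ≤ p` with
`f R (q - W*W) = 0` into `W*W R`, where `x W*` inverts `W y`; so `r + LP(W y f)` is again such a
projection, of rank `N r + N f`, and iterating yields projections of rank `n N r` for all `n`.
A nonzero element of `r R (q - W*W)` gives equivalent nonzero subprojections of `r` and `q - W*W`,
which by hypothesis contain nonzero `*`-equivalent subprojections, contradicting maximality.
So `p = WW*`, and comparing ranks gives `q = W*W`.
-/

namespace AraClaramunt

lemma nonpos_of_forall_nat_mul_le {b c : ℝ} (h : ∀ n : ℕ, n * c ≤ b) : c ≤ 0 := by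
  by_contra! hc
  obtain ⟨n, hn⟩ := exists_nat_gt (b / c)
  rw [div_lt_iff₀ hc] at hn
  linarith [h n]

lemma nonpos_of_forall_le_sub_succ {a : ℕ → ℝ} {b c : ℝ} (ha : ∀ n, a n ≤ b)
    (h : ∀ n, c ≤ a (n + 1) - a n) : c ≤ 0 := by
  have hsum : ∀ n : ℕ, n * c ≤ a n - a 0 := fun n => by
    induction n with
    | zero => simp
    | succ n ih => push_cast; linarith [h n]
  exact nonpos_of_forall_nat_mul_le (b := b - a 0) fun n => (hsum n).trans (by linarith [ha n])

lemma exists_mem_forall_le_two_mul {α : Type*} {S : Set α} {f : α → ℝ} (hS : S.Nonempty)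
    (hbdd : BddAbove (f '' S)) (hf : ∀ a ∈ S, 0 ≤ f a) :
    ∃ a ∈ S, ∀ b ∈ S, f b ≤ 2 * f a := by
  have hle : ∀ b ∈ S, f b ≤ sSup (f '' S) := fun b hb => le_csSup hbdd ⟨b, hb, rfl⟩
  rcases lt_or_ge 0 (sSup (f '' S)) with hpos | hnonpos
  · obtain ⟨_, ⟨a, ha, rfl⟩, hlt⟩ := exists_lt_of_lt_csSup (hS.image f) (half_lt_self hpos)
    exact ⟨a, ha, fun b hb => by linarith [hle b hb]⟩
  · obtain ⟨a, ha⟩ := hS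
    exact ⟨a, ha, fun b hb => by linarith [hle b hb, hf a ha]⟩

section Projections

variable {R : Type*} [Ring R] {a b e : R}

lemma ProjLE.trans (hab : ProjLE a b) (hbe : ProjLE b e) : ProjLE a e :=
  ⟨by rw [← hab.1, ← mul_assoc, hbe.1], by rw [← hab.2, mul_assoc, hbe.2]⟩

lemma ProjLE.add (ha : ProjLE a e) (hb : ProjLE b e) : ProjLE (a + b) e :=
  ⟨by rw [mul_add, ha.1, hb.1], by rw [add_mul, ha.2, hb.2]⟩

lemma ProjLE.le_add (ha : IsIdempotentElem a) (hab : a * b = 0) (hba : b * a = 0) :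
    ProjLE a (a + b) :=
  ⟨by rw [add_mul, ha.eq, hba, add_zero], by rw [mul_add, ha.eq, hab, add_zero]⟩

lemma sub_projLE (he : IsIdempotentElem e) (ha : ProjLE a e) : ProjLE (e - a) e :=
  ⟨by rw [mul_sub, he.eq, ha.1], by rw [sub_mul, he.eq, ha.2]⟩

lemma ProjLE.sub_antitone (he : IsIdempotentElem e) (hab : ProjLE a b) (hbe : ProjLE b e) :
    ProjLE (e - b) (e - a) := by
  have hae := hab.trans hbe
  constructor
  · rw [sub_mul, mul_sub, mul_sub, he.eq, hbe.1, hae.2, hab.2]; abel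
  · rw [sub_mul, mul_sub, mul_sub, he.eq, hbe.2, hae.1, hab.1]; abel

lemma ProjLE.mul_eq_zero_of_le_sub (ha : ProjLE a (e - b)) (hb : ProjLE b e)
    (hbb : IsIdempotentElem b) : a * b = 0 ∧ b * a = 0 := by
  constructor
  · rw [← ha.2, mul_assoc, sub_mul, hb.1, hbb.eq, sub_self, mul_zero]
  · rw [← ha.1, ← mul_assoc, mul_sub, hb.2, hbb.eq, sub_self, zero_mul]

variable [StarRing R]

lemma ProjLE.refl (he : IsProjection e) : ProjLE e e := ⟨he.2, he.2⟩

lemma IsProjection.sub (he : IsProjection e) (ha : IsProjection a) (hae : ProjLE a e) :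
    IsProjection (e - a) := by
  refine ⟨by rw [star_sub, he.1, ha.1], ?_⟩
  rw [sub_mul, mul_sub, mul_sub, he.2, hae.1, hae.2, ha.2]; abel

lemma IsProjection.add (ha : IsProjection a) (hb : IsProjection b) (hab : a * b = 0)
    (hba : b * a = 0) : IsProjection (a + b) := by
  refine ⟨by rw [star_add, ha.1, hb.1], ?_⟩
  rw [add_mul, mul_add, mul_add, ha.2, hb.2, hab, hba, add_zero, zero_add]

end Projections

section PartialIsometries

variable {R : Type*} [Ring R] [StarRing R]

lemma mul_star_mul_self_of_isIdempotentElem (hproper : ProperStar R) {W : R}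
    (hW : IsIdempotentElem (W * star W)) : W * star W * W = W := by
  have hd : (W - W * star W * W) * star (W - W * star W * W) = 0 := by
    have hexp : (W - W * star W * W) * star (W - W * star W * W) =
        W * star W - (W * star W) * (W * star W) -
          ((W * star W) * (W * star W) - (W * star W) * (W * star W) * (W * star W)) := by
      simp only [star_sub, star_mul, star_star]; noncomm_ring
    rw [hexp, hW.eq, hW.eq]; abel
  exact (sub_eq_zero.mp (star_eq_zero.mp (hproper _ (by rwa [star_star])))).symm

lemma star_mul_star_mul_self {W : R} (hW : W * star W * W = W) : star W * W * star W = star W := by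
  simpa only [star_mul, star_star, mul_assoc] using congrArg star hW

lemma star_mul_eq_zero_of_orthogonal {W w : R} (hW : W * star W * W = W)
    (hw : w * star w * w = w) (h : (W * star W) * (w * star w) = 0) : star W * w = 0 :=
  calc star W * w = (star W * W * star W) * (w * star w * w) := by
        rw [star_mul_star_mul_self hW, hw]
    _ = star W * ((W * star W) * (w * star w)) * w := by noncomm_ring
    _ = 0 := by rw [h, mul_zero, zero_mul]

lemma mul_star_eq_zero_of_orthogonal {W w : R} (hW : W * star W * W = W)
    (hw : w * star w * w = w) (h : (star W * W) * (star w * w) = 0) : W * star w = 0 :=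
  calc W * star w = (W * star W * W) * (star w * w * star w) := by
        rw [star_mul_star_mul_self hw, hW]
    _ = W * ((star W * W) * (star w * w)) * star w := by noncomm_ring
    _ = 0 := by rw [h, mul_zero, zero_mul]

structure IsPartialIsometryBelow (p q W : R) : Prop where
  isProjection_mul_star : IsProjection (W * star W)
  isProjection_star_mul : IsProjection (star W * W)
  mul_star_le : ProjLE (W * star W) p
  star_mul_le : ProjLE (star W * W) q

namespace IsPartialIsometryBelow

variable {p q p' q' W w : R}

lemma zero : IsPartialIsometryBelow p q (0 : R) := by
  constructor <;> simp [IsProjection, ProjLE]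

lemma mono (hW : IsPartialIsometryBelow p q W) (hp : ProjLE p p') (hq : ProjLE q q') :
    IsPartialIsometryBelow p' q' W :=
  ⟨hW.1, hW.2, hW.3.trans hp, hW.4.trans hq⟩

lemma mul_star_mul_self (hproper : ProperStar R) (hW : IsPartialIsometryBelow p q W) :
    W * star W * W = W :=
  mul_star_mul_self_of_isIdempotentElem hproper hW.1.2

lemma orthogonal (hW : IsPartialIsometryBelow p q W)
    (hw : IsPartialIsometryBelow (p - W * star W) (q - star W * W) w) :
    (W * star W) * (w * star w) = 0 ∧ (w * star w) * (W * star W) = 0 ∧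
      (star W * W) * (star w * w) = 0 ∧ (star w * w) * (star W * W) = 0 := by
  obtain ⟨h₁, h₂⟩ := hw.3.mul_eq_zero_of_le_sub hW.3 hW.1.2
  obtain ⟨h₃, h₄⟩ := hw.4.mul_eq_zero_of_le_sub hW.4 hW.2.2
  exact ⟨h₂, h₁, h₄, h₃⟩

lemma add_mul_star (hproper : ProperStar R) (hW : IsPartialIsometryBelow p q W)
    (hw : IsPartialIsometryBelow (p - W * star W) (q - star W * W) w) :
    (W + w) * star (W + w) = W * star W + w * star w := by
  obtain ⟨-, -, hQq, hqQ⟩ := hW.orthogonal hw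
  have hWw := mul_star_eq_zero_of_orthogonal (hW.mul_star_mul_self hproper)
    (hw.mul_star_mul_self hproper) hQq
  have hwW := mul_star_eq_zero_of_orthogonal (hw.mul_star_mul_self hproper)
    (hW.mul_star_mul_self hproper) hqQ
  rw [star_add, add_mul, mul_add, mul_add, hWw, hwW, add_zero, zero_add]

lemma add_star_mul (hproper : ProperStar R) (hW : IsPartialIsometryBelow p q W)
    (hw : IsPartialIsometryBelow (p - W * star W) (q - star W * W) w) :
    star (W + w) * (W + w) = star W * W + star w * w := by
  obtain ⟨hPp, hpP, -, -⟩ := hW.orthogonal hw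
  have hWw := star_mul_eq_zero_of_orthogonal (hW.mul_star_mul_self hproper)
    (hw.mul_star_mul_self hproper) hPp
  have hwW := star_mul_eq_zero_of_orthogonal (hw.mul_star_mul_self hproper)
    (hW.mul_star_mul_self hproper) hpP
  rw [star_add, add_mul, mul_add, mul_add, hWw, hwW, add_zero, zero_add]

lemma add (hproper : ProperStar R) (hp : IsProjection p) (hq : IsProjection q)
    (hW : IsPartialIsometryBelow p q W)
    (hw : IsPartialIsometryBelow (p - W * star W) (q - star W * W) w) :
    IsPartialIsometryBelow p q (W + w) := by
  obtain ⟨hPp, hpP, hQq, hqQ⟩ := hW.orthogonal hw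
  have hP := hW.add_mul_star hproper hw
  have hQ := hW.add_star_mul hproper hw
  exact ⟨hP ▸ hW.1.add hw.1 hPp hpP, hQ ▸ hW.2.add hw.2 hQq hqQ,
    hP ▸ hW.3.add (hw.3.trans (sub_projLE hp.2 hW.3)),
    hQ ▸ hW.4.add (hw.4.trans (sub_projLE hq.2 hW.4))⟩

end IsPartialIsometryBelow

end PartialIsometries

section Rank

variable {R : Type*} [Ring R] {N : R → ℝ}

namespace IsPseudoRankFunction

lemma map_zero (hN : IsPseudoRankFunction N) : N 0 = 0 := by
  have h := hN.add_of_orthogonal 1 0 (by simp [IsIdempotentElem]) (by simp [IsIdempotentElem])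
    (by simp) (by simp)
  simp only [add_zero] at h
  linarith

lemma map_neg (hN : IsPseudoRankFunction N) (z : R) : N (-z) = N z :=
  le_antisymm (by simpa using hN.mul_le_right (-1) z) (by simpa using hN.mul_le_right (-1) (-z))

lemma map_sub_comm (hN : IsPseudoRankFunction N) (a b : R) : N (a - b) = N (b - a) := by
  rw [← neg_sub, hN.map_neg]

lemma map_sub_le (hN : IsPseudoRankFunction N) (a b c : R) :
    N (a - c) ≤ N (a - b) + N (b - c) := by
  simpa using hN.subadditive (a - b) (b - c)

lemma map_eq_add_map_sub (hN : IsPseudoRankFunction N) {a e : R} (he : IsIdempotentElem e)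
    (ha : IsIdempotentElem a) (hae : ProjLE a e) : N e = N a + N (e - a) := by
  have hsub : IsIdempotentElem (e - a) := by
    rw [IsIdempotentElem, sub_mul, mul_sub, mul_sub, he.eq, hae.1, hae.2, ha.eq]; abel
  have h := hN.add_of_orthogonal a (e - a) ha hsub (by rw [mul_sub, hae.2, ha.eq, sub_self])
    (by rw [sub_mul, hae.1, ha.eq, sub_self])
  rwa [add_sub_cancel] at h

end IsPseudoRankFunction

lemma EquivProj.rank_eq (hN : IsPseudoRankFunction N) {e f : R} (h : EquivProj e f) :
    N e = N f := by
  obtain ⟨x, y, hx, hy, he, hf⟩ := h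
  apply le_antisymm
  · calc N e = N (x * y) := by rw [← he]
      _ ≤ N (e * x * f) := by rw [← hx]; exact hN.mul_le_left x y
      _ ≤ N f := hN.mul_le_right _ _
  · calc N f = N (y * x) := by rw [← hf]
      _ ≤ N (f * y * e) := by rw [← hy]; exact hN.mul_le_left y x
      _ ≤ N e := hN.mul_le_right _ _

variable [StarRing R]

lemma IsLeftProjOf.rank_eq (hN : IsPseudoRankFunction N) {z e : R} (h : IsLeftProjOf z e) :
    N e = N z := by
  obtain ⟨-, hez, c, hc⟩ := h
  refine le_antisymm ?_ ?_
  · rw [hc]; exact hN.mul_le_left z c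
  · calc N z = N (e * z) := by rw [hez]
      _ ≤ N e := hN.mul_le_left e z

end Rank

section StarRegular

variable {R : Type*} [Ring R] [StarRing R]

lemma exists_star_eq_self_mul_mul_eq (hreg : VNRegular R) {a : R} (ha : star a = a) :
    ∃ u : R, star u = u ∧ a * u * a = a := by
  obtain ⟨v, hv⟩ := hreg a
  have hv' : a * star v * a = a := by
    simpa only [star_mul, ha, mul_assoc] using (congrArg star hv).symm
  refine ⟨v * a * star v, by simp only [star_mul, star_star, ha, mul_assoc], ?_⟩
  calc a * (v * a * star v) * a = (a * v * a) * star v * a := by noncomm_ring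
    _ = a := by rw [← hv, hv']

lemma mul_mul_star_mul_self_eq (hproper : ProperStar R) {z u : R} (hu : star u = u)
    (h : star z * z * u * (star z * z) = star z * z) : z * u * (star z * z) = z := by
  have hd : star (z * u * (star z * z) - z) * (z * u * (star z * z) - z) = 0 := by
    have hstar : star (z * u * (star z * z) - z) = star z * z * u * star z - star z := by
      simp only [star_sub, star_mul, star_star, hu, mul_assoc]
    rw [hstar]
    linear_combination (norm := noncomm_ring) h * (u * (star z * z)) - h
  exact sub_eq_zero.mp (hproper _ hd)

lemma exists_mul_mul_star_mul_self_eq (hreg : VNRegular R) (hproper : ProperStar R) (z : R) :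
    ∃ u : R, star u = u ∧ z * u * (star z * z) = z := by
  obtain ⟨u, hu, h⟩ := exists_star_eq_self_mul_mul_eq hreg (a := star z * z) (by simp)
  exact ⟨u, hu, mul_mul_star_mul_self_eq hproper hu h⟩

lemma exists_isLeftProjOf (hreg : VNRegular R) (hproper : ProperStar R) (z : R) :
    ∃ e, IsLeftProjOf z e := by
  obtain ⟨u, hu, hzu⟩ := exists_mul_mul_star_mul_self_eq hreg hproper z
  refine ⟨z * u * star z, ⟨?_, ?_⟩, ?_, u * star z, by rw [mul_assoc]⟩
  · simp only [star_mul, star_star, hu, mul_assoc]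
  · calc z * u * star z * (z * u * star z) = z * u * (star z * z) * u * star z := by noncomm_ring
      _ = z * u * star z := by rw [hzu]
  · calc z * u * star z * z = z * u * (star z * z) := by noncomm_ring
      _ = z := hzu

lemma exists_isRightProjOf (hreg : VNRegular R) (hproper : ProperStar R) (z : R) :
    ∃ f, IsRightProjOf z f := by
  obtain ⟨e, he, hez, c, hc⟩ := exists_isLeftProjOf hreg hproper (star z)
  refine ⟨e, he, ?_, star c, ?_⟩
  · simpa only [star_mul, star_star, he.1] using congrArg star hez
  · simpa only [star_mul, star_star, he.1] using congrArg star hc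

lemma IsLeftProjOf.projLE {z e r : R} (he : IsLeftProjOf z e) (hr : IsProjection r)
    (hrz : r * z = z) : ProjLE e r := by
  obtain ⟨he, -, c, hc⟩ := he
  have hre : r * e = e := by rw [hc, ← mul_assoc, hrz]
  refine ⟨hre, ?_⟩
  simpa only [star_mul, he.1, hr.1] using congrArg star hre

lemma IsRightProjOf.projLE {z f s : R} (hf : IsRightProjOf z f) (hs : IsProjection s)
    (hzs : z * s = z) : ProjLE f s := by
  obtain ⟨hf, -, c, hc⟩ := hf
  have hfs : f * s = f := by rw [hc, mul_assoc, hzs]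
  refine ⟨?_, hfs⟩
  simpa only [star_mul, hf.1, hs.1] using congrArg star hfs

lemma equivProj_of_isLeftProjOf_of_isRightProjOf (hreg : VNRegular R) {z e f : R}
    (he : IsLeftProjOf z e) (hf : IsRightProjOf z f) : EquivProj e f := by
  obtain ⟨he, hez, c, hc⟩ := he
  obtain ⟨hf, hzf, d, hd⟩ := hf
  obtain ⟨y, hy⟩ := hreg z
  refine ⟨z, f * y * e, by rw [hez, hzf], ?_, ?_, ?_⟩
  · rw [show f * (f * y * e) * e = (f * f) * y * (e * e) by noncomm_ring, hf.2, he.2]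
  · calc e = z * y * z * c := by rw [← hy, hc]
      _ = z * f * y * e := by rw [hzf, hc, mul_assoc (z * y)]
      _ = z * (f * y * e) := by noncomm_ring
  · calc f = d * (z * y * z) := by rw [← hy, hd]
      _ = f * y * (e * z) := by rw [hd, hez]; noncomm_ring
      _ = f * y * e * z := by noncomm_ring

variable {N : R → ℝ}

lemma rank_star_mul_self (hreg : VNRegular R) (hproper : ProperStar R)
    (hN : IsPseudoRankFunction N) (z : R) : N (star z * z) = N z := by
  obtain ⟨u, -, hzu⟩ := exists_mul_mul_star_mul_self_eq hreg hproper z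
  refine le_antisymm (hN.mul_le_right _ _) ?_
  calc N z = N (z * u * (star z * z)) := by rw [hzu]
    _ ≤ N (star z * z) := hN.mul_le_right _ _

lemma rank_star (hreg : VNRegular R) (hproper : ProperStar R) (hN : IsPseudoRankFunction N)
    (z : R) : N (star z) = N z := by
  have h₁ := rank_star_mul_self hreg hproper hN z
  have h₂ := rank_star_mul_self hreg hproper hN (star z)
  rw [star_star] at h₂
  linarith [hN.mul_le_left (star z) z, hN.mul_le_left z (star z)]

lemma rank_mul_star_self (hreg : VNRegular R) (hproper : ProperStar R)
    (hN : IsPseudoRankFunction N) (z : R) : N (z * star z) = N z := by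
  simpa only [star_star, rank_star hreg hproper hN] using
    rank_star_mul_self hreg hproper hN (star z)

end StarRegular

section Convergence

open Filter Topology

variable {R : Type*} [Ring R] {N : R → ℝ} {u v : ℕ → R} {a b : R}

namespace RankTendsto

lemma const (hN : IsPseudoRankFunction N) (a : R) : RankTendsto N (fun _ => a) a :=
  fun _ hε => ⟨0, fun _ _ => by rwa [sub_self, hN.map_zero]⟩

lemma congr' (hu : RankTendsto N u a) (h : ∀ᶠ n in atTop, u n = v n) : RankTendsto N v a := by
  obtain ⟨n₀, h₀⟩ := eventually_atTop.mp h
  intro ε hε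
  obtain ⟨n₁, h₁⟩ := hu ε hε
  exact ⟨max n₀ n₁, fun n hn => h₀ n (le_of_max_le_left hn) ▸ h₁ n (le_of_max_le_right hn)⟩

lemma mul (hN : IsPseudoRankFunction N) (hu : RankTendsto N u a) (hv : RankTendsto N v b) :
    RankTendsto N (fun n => u n * v n) (a * b) := by
  intro ε hε
  obtain ⟨n₁, h₁⟩ := hu (ε / 2) (by linarith)
  obtain ⟨n₂, h₂⟩ := hv (ε / 2) (by linarith)
  refine ⟨max n₁ n₂, fun n hn => ?_⟩
  calc N (u n * v n - a * b) = N (u n * (v n - b) + (u n - a) * b) := by congr 1; noncomm_ring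
    _ ≤ N (v n - b) + N (u n - a) :=
      (hN.subadditive _ _).trans (add_le_add (hN.mul_le_right _ _) (hN.mul_le_left _ _))
    _ < ε := by linarith [h₁ n (le_of_max_le_left hn), h₂ n (le_of_max_le_right hn)]

lemma unique (hN : IsRankFunction N) (ha : RankTendsto N u a) (hb : RankTendsto N u b) :
    a = b := by
  refine sub_eq_zero.mp (hN.2 _ (le_antisymm (le_of_forall_pos_lt_add fun ε hε => ?_)
    (hN.1.nonneg _)))
  obtain ⟨n₁, h₁⟩ := ha (ε / 2) (by linarith)
  obtain ⟨n₂, h₂⟩ := hb (ε / 2) (by linarith)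
  have htri := hN.1.map_sub_le a (u (max n₁ n₂)) b
  rw [hN.1.map_sub_comm a (u _)] at htri
  linarith [h₁ _ (le_max_left n₁ n₂), h₂ _ (le_max_right n₁ n₂)]

lemma eq_of_eventuallyEq (hN : IsRankFunction N) (hu : RankTendsto N u a)
    (hv : RankTendsto N v b) (h : ∀ᶠ n in atTop, u n = v n) : a = b :=
  unique hN (hu.congr' h) hv

lemma projLE_of_forall (hN : IsRankFunction N) (hu : RankTendsto N u a) {e : R}
    (h : ∀ n, ProjLE (u n) e) : ProjLE a e :=
  ⟨eq_of_eventuallyEq hN ((const hN.1 e).mul hN.1 hu) hu (.of_forall fun n => (h n).1),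
    eq_of_eventuallyEq hN (hu.mul hN.1 (const hN.1 e)) hu (.of_forall fun n => (h n).2)⟩

variable [StarRing R]

lemma star (hreg : VNRegular R) (hproper : ProperStar R) (hN : IsPseudoRankFunction N)
    (hu : RankTendsto N u a) : RankTendsto N (fun n => star (u n)) (star a) := by
  intro ε hε
  obtain ⟨n₀, h₀⟩ := hu ε hε
  exact ⟨n₀, fun n hn => by rw [← star_sub, rank_star hreg hproper hN]; exact h₀ n hn⟩

lemma isProjection (hreg : VNRegular R) (hproper : ProperStar R) (hN : IsRankFunction N)
    (hu : RankTendsto N u a) (h : ∀ n, IsProjection (u n)) : IsProjection a :=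
  ⟨eq_of_eventuallyEq hN (hu.star hreg hproper hN.1) hu (.of_forall fun n => (h n).1),
    eq_of_eventuallyEq hN (hu.mul hN.1 hu) hu (.of_forall fun n => (h n).2)⟩

lemma projLE_of_monotone (hN : IsRankFunction N) (hu : RankTendsto N u a)
    (hproj : ∀ n, IsProjection (u n)) (hmono : ∀ n, ProjLE (u n) (u (n + 1))) (n : ℕ) :
    ProjLE (u n) a := by
  have hle : ∀ m, n ≤ m → ProjLE (u n) (u m) := fun m hnm => by
    induction m, hnm using Nat.le_induction with
    | base => exact .refl (hproj n)
    | succ m _ ih => exact ih.trans (hmono m)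
  have hev : ∀ᶠ m in atTop, ProjLE (u n) (u m) := eventually_atTop.mpr ⟨n, hle⟩
  exact ⟨eq_of_eventuallyEq hN (hu.mul hN.1 (const hN.1 (u n))) (const hN.1 (u n))
      (hev.mono fun m hm => hm.1),
    eq_of_eventuallyEq hN ((const hN.1 (u n)).mul hN.1 hu) (const hN.1 (u n))
      (hev.mono fun m hm => hm.2)⟩

end RankTendsto

lemma rankCauchy_of_rank_sub_le (hN : IsPseudoRankFunction N) {c : ℕ → ℝ}
    (hc : BddAbove (Set.range c)) (hu : ∀ n, N (u (n + 1) - u n) ≤ c (n + 1) - c n) :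
    RankCauchy N u := by
  have hmono : Monotone c :=
    monotone_nat_of_le_succ fun n => by linarith [hu n, hN.nonneg (u (n + 1) - u n)]
  have hle : ∀ n m, n ≤ m → N (u m - u n) ≤ c m - c n := fun n m hnm => by
    induction m, hnm using Nat.le_induction with
    | base => simp [hN.map_zero]
    | succ m _ ih => linarith [hN.map_sub_le (u (m + 1)) (u m) (u n), hu m]
  have hcauchy : CauchySeq c := (tendsto_atTop_ciSup hmono hc).cauchySeq
  intro ε hε
  obtain ⟨n₀, hn₀⟩ := Metric.cauchySeq_iff'.mp hcauchy (ε / 2) (by linarith)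
  refine ⟨n₀, fun m n hm hn => ?_⟩
  have hcm := (abs_lt.mp (Real.dist_eq _ _ ▸ hn₀ m hm)).2
  have hcn := (abs_lt.mp (Real.dist_eq _ _ ▸ hn₀ n hn)).2
  calc N (u m - u n) ≤ N (u m - u n₀) + N (u n - u n₀) := by
        rw [hN.map_sub_comm (u n)]; exact hN.map_sub_le _ _ _
    _ < ε := by linarith [hle n₀ m hm, hle n₀ n hn]

end Convergence

section Exhaustion

variable {R : Type*} [Ring R] [StarRing R] {N : R → ℝ}

lemma exists_projection_rank_eq_add (hreg : VNRegular R) (hproper : ProperStar R)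
    (hN : IsPseudoRankFunction N) {p q x y W f : R} (hp : IsProjection p) (hq : IsProjection q)
    (hy : y = q * y * p) (hxy : p = x * y) (hW : IsPartialIsometryBelow p q W)
    (hrs : ∀ t, (p - W * star W) * t * (q - star W * W) = 0)
    (hf : IsProjection f) (hfp : ProjLE f p) (hfs : ∀ t, f * t * (q - star W * W) = 0) :
    ∃ f', IsProjection f' ∧ ProjLE f' p ∧ (∀ t, f' * t * (q - star W * W) = 0) ∧
      N f' = N (p - W * star W) + N f := by
  have hs : star (q - star W * W) = q - star W * W := by
    rw [star_sub, hq.1, star_mul, star_star]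
  have hQyf : star W * W * (y * f) = y * f := by
    have hsyf : (q - star W * W) * (y * f) = 0 := by
      simpa only [star_mul, star_star, hf.1, hs, star_zero, mul_assoc] using
        congrArg star (hfs (star y))
    have hqy : q * y = y := by rw [hy, ← mul_assoc, ← mul_assoc, hq.2]
    rwa [sub_mul, ← mul_assoc, hqy, sub_eq_zero, eq_comm] at hsyf
  obtain ⟨e, he⟩ := exists_isLeftProjOf hreg hproper (W * (y * f))
  have heP : ProjLE e (W * star W) :=
    he.projLE hW.1 (by rw [← mul_assoc, hW.mul_star_mul_self hproper])
  have hep : ProjLE e p := heP.trans hW.3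
  have hr : IsProjection (p - W * star W) := hp.sub hW.1 hW.3
  obtain ⟨her, hre⟩ := ProjLE.mul_eq_zero_of_le_sub (by rwa [sub_sub_cancel])
    (sub_projLE hp.2 hW.3) hr.2
  have hNe : N e = N f := by
    rw [he.rank_eq hN]
    refine le_antisymm ((hN.mul_le_right _ _).trans (hN.mul_le_right _ _)) ?_
    calc N f = N (x * (star W * (W * (y * f)))) := by
          rw [← mul_assoc (star W), hQyf, ← mul_assoc, ← hxy, hfp.1]
      _ ≤ N (W * (y * f)) := (hN.mul_le_right _ _).trans (hN.mul_le_right _ _)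
  refine ⟨p - W * star W + e, hr.add he.1 hre her, (sub_projLE hp.2 hW.3).add hep,
    fun t => ?_, by rw [hN.add_of_orthogonal _ _ hr.2 he.1.2 hre her, hNe]⟩
  obtain ⟨-, -, c, hc⟩ := he
  calc (p - W * star W + e) * t * (q - star W * W)
      = (p - W * star W) * t * (q - star W * W) + W * (y * (f * (c * t) * (q - star W * W))) := by
        rw [hc]; noncomm_ring
    _ = 0 := by rw [hrs, hfs, mul_zero, mul_zero, add_zero]

lemma exists_sub_mul_sub_ne_zero (hreg : VNRegular R) (hproper : ProperStar R)
    (hN : IsRankFunction N) {p q W : R} (hp : IsProjection p) (hq : IsProjection q)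
    (hpq : EquivProj p q) (hW : IsPartialIsometryBelow p q W) (hr : p - W * star W ≠ 0) :
    ∃ t, (p - W * star W) * t * (q - star W * W) ≠ 0 := by
  by_contra! hrs
  obtain ⟨x, y, -, hy, hxy, -⟩ := hpq
  have hgrow : ∀ n : ℕ, ∃ f, IsProjection f ∧ ProjLE f p ∧
      (∀ t, f * t * (q - star W * W) = 0) ∧ N f = (n + 1) * N (p - W * star W) := by
    intro n
    induction n with
    | zero => exact ⟨_, hp.sub hW.1 hW.3, sub_projLE hp.2 hW.3, hrs, by simp⟩
    | succ n ih =>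
      obtain ⟨f, hf, hfp, hfs, hNf⟩ := ih
      obtain ⟨f', hf', hf'p, hf's, hNf'⟩ :=
        exists_projection_rank_eq_add hreg hproper hN.1 hp hq hy hxy hW hrs hf hfp hfs
      exact ⟨f', hf', hf'p, hf's, by rw [hNf', hNf]; push_cast; ring⟩
  have hpos : 0 < N (p - W * star W) :=
    lt_of_le_of_ne (hN.1.nonneg _) fun h => hr (hN.2 _ h.symm)
  refine hpos.not_ge (nonpos_of_forall_nat_mul_le (b := 1) fun n => ?_)
  obtain ⟨f, -, -, -, hNf⟩ := hgrow n
  linarith [hN.1.le_one f]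

lemma isPartialIsometryBelow_of_rankTendsto (hreg : VNRegular R) (hproper : ProperStar R)
    (hN : IsRankFunction N) {p q : R} (hp : IsProjection p) (hq : IsProjection q)
    {W : ℕ → R} {V : R} (hlim : RankTendsto N W V) (hW : ∀ n, IsPartialIsometryBelow p q (W n))
    (hPmono : ∀ n, ProjLE (W n * star (W n)) (W (n + 1) * star (W (n + 1))))
    (hQmono : ∀ n, ProjLE (star (W n) * W n) (star (W (n + 1)) * W (n + 1))) :
    IsPartialIsometryBelow p q V ∧ ∀ n, ProjLE (p - V * star V) (p - W n * star (W n)) ∧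
      ProjLE (q - star V * V) (q - star (W n) * W n) := by
  have hPlim := hlim.mul hN.1 (hlim.star hreg hproper hN.1)
  have hQlim := (hlim.star hreg hproper hN.1).mul hN.1 hlim
  have hPp := hPlim.projLE_of_forall hN fun n => (hW n).3
  have hQq := hQlim.projLE_of_forall hN fun n => (hW n).4
  refine ⟨⟨hPlim.isProjection hreg hproper hN fun n => (hW n).1,
    hQlim.isProjection hreg hproper hN fun n => (hW n).2, hPp, hQq⟩, fun n => ⟨?_, ?_⟩⟩
  · exact (hPlim.projLE_of_monotone hN (fun n => (hW n).1) hPmono n).sub_antitone hp.2 hPp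
  · exact (hQlim.projLE_of_monotone hN (fun n => (hW n).2) hQmono n).sub_antitone hq.2 hQq

lemma exists_maximal_isPartialIsometryBelow (hreg : VNRegular R) (hproper : ProperStar R)
    (hN : IsRankFunction N) (hcomplete : RankComplete N) {p q : R} (hp : IsProjection p)
    (hq : IsProjection q) :
    ∃ V, IsPartialIsometryBelow p q V ∧
      ∀ w, IsPartialIsometryBelow (p - V * star V) (q - star V * V) w → w = 0 := by
  choose ext hext hgreedy using fun W : R =>
    exists_mem_forall_le_two_mul
      (S := {w | IsPartialIsometryBelow (p - W * star W) (q - star W * W) w})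
      (f := fun w => N (w * star w)) ⟨0, .zero⟩
      ⟨1, by rintro _ ⟨w, -, rfl⟩; exact hN.1.le_one _⟩ (fun w _ => hN.1.nonneg _)
  obtain ⟨W, hW_zero, hW_succ⟩ : ∃ W : ℕ → R, W 0 = 0 ∧ ∀ n, W (n + 1) = W n + ext (W n) :=
    ⟨fun n => Nat.rec 0 (fun _ V => V + ext V) n, rfl, fun _ => rfl⟩
  have hW : ∀ n, IsPartialIsometryBelow p q (W n) := by
    intro n
    induction n with
    | zero => exact hW_zero ▸ .zero
    | succ n ih => rw [hW_succ]; exact ih.add hproper hp hq (hext _)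
  have horth n := (hW n).orthogonal (hext (W n))
  have hP_succ n : W (n + 1) * star (W (n + 1)) =
      W n * star (W n) + ext (W n) * star (ext (W n)) :=
    hW_succ n ▸ (hW n).add_mul_star hproper (hext _)
  have hQ_succ n : star (W (n + 1)) * W (n + 1) =
      star (W n) * W n + star (ext (W n)) * ext (W n) :=
    hW_succ n ▸ (hW n).add_star_mul hproper (hext _)
  have hrank n : N (W (n + 1) * star (W (n + 1))) =
      N (W n * star (W n)) + N (ext (W n) * star (ext (W n))) := by
    rw [hP_succ]
    exact hN.1.add_of_orthogonal _ _ (hW n).1.2 (hext _).1.2 (horth n).1 (horth n).2.1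
  obtain ⟨V, hlim⟩ : ∃ V, RankTendsto N W V := hcomplete W <| rankCauchy_of_rank_sub_le hN.1
    (c := fun n => N (W n * star (W n))) ⟨1, by rintro _ ⟨n, rfl⟩; exact hN.1.le_one _⟩
    fun n => by
      rw [hrank, add_sub_cancel_left, hW_succ, add_sub_cancel_left,
        rank_mul_star_self hreg hproper hN.1]
  obtain ⟨hV, hVle⟩ := isPartialIsometryBelow_of_rankTendsto hreg hproper hN hp hq hlim hW
    (fun n => hP_succ n ▸ .le_add (hW n).1.2 (horth n).1 (horth n).2.1)
    (fun n => hQ_succ n ▸ .le_add (hW n).2.2 (horth n).2.2.1 (horth n).2.2.2)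
  refine ⟨V, hV, fun w hw => ?_⟩
  have hw0 : N (w * star w) ≤ 0 :=
    nonpos_of_forall_le_sub_succ (a := fun n => 2 * N (W n * star (W n))) (b := 2)
      (fun n => by linarith [hN.1.le_one (W n * star (W n))])
      (fun n => by linarith [hrank n, hgreedy (W n) w (hw.mono (hVle n).1 (hVle n).2)])
  exact star_eq_zero.mp (hproper _ (by simpa using hN.2 _ (hw0.antisymm (hN.1.nonneg _))))

lemma starEquivProj_of_equivProj (hreg : VNRegular R) (hproper : ProperStar R)
    (hN : IsRankFunction N) (hcomplete : RankComplete N)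
    (happrox : ∀ p q : R, IsProjection p → IsProjection q → EquivProj p q →
      ∀ ε : ℝ, 0 < ε →
        ∃ p' q' : R, IsProjection p' ∧ IsProjection q' ∧
          ProjLE p' p ∧ ProjLE q' q ∧ StarEquivProj p' q' ∧
          N (p - p') < ε ∧ N (q - q') < ε)
    {p q : R} (hp : IsProjection p) (hq : IsProjection q) (hpq : EquivProj p q) :
    StarEquivProj p q := by
  obtain ⟨W, hW, hmax⟩ := exists_maximal_isPartialIsometryBelow hreg hproper hN hcomplete hp hq
  have hr := hp.sub hW.1 hW.3
  have hs := hq.sub hW.2 hW.4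
  by_cases hr0 : p - W * star W = 0
  · have hs0 : N (q - star W * W) = 0 := by
      have hNp := hN.1.map_eq_add_map_sub hp.2 hW.1.2 hW.3
      have hNq := hN.1.map_eq_add_map_sub hq.2 hW.2.2 hW.4
      rw [hr0, hN.1.map_zero, rank_mul_star_self hreg hproper hN.1] at hNp
      rw [rank_star_mul_self hreg hproper hN.1] at hNq
      linarith [hpq.rank_eq hN.1]
    exact ⟨W, sub_eq_zero.mp hr0, sub_eq_zero.mp (hN.2 _ hs0)⟩
  obtain ⟨t, ht⟩ := exists_sub_mul_sub_ne_zero hreg hproper hN hp hq hpq hW hr0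
  obtain ⟨e, he⟩ := exists_isLeftProjOf hreg hproper ((p - W * star W) * t * (q - star W * W))
  obtain ⟨f, hf⟩ := exists_isRightProjOf hreg hproper ((p - W * star W) * t * (q - star W * W))
  have her : ProjLE e (p - W * star W) :=
    he.projLE hr (by rw [← mul_assoc, ← mul_assoc, hr.2])
  have hfs : ProjLE f (q - star W * W) := hf.projLE hs (by rw [mul_assoc, hs.2])
  have hNe : 0 < N e :=
    he.rank_eq hN.1 ▸ lt_of_le_of_ne (hN.1.nonneg _) fun h => ht (hN.2 _ h.symm)
  obtain ⟨p', q', hp', hq', hp'e, hq'f, ⟨w, rfl, rfl⟩, hNp', -⟩ :=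
    happrox e f he.1 hf.1 (equivProj_of_isLeftProjOf_of_isRightProjOf hreg he hf) (N e) hNe
  have hw : w = 0 := hmax w ⟨hp', hq', hp'e.trans her, hq'f.trans hfs⟩
  simp [hw] at hNp'

end Exhaustion

/-- **Lemma 4.5** (Ara–Claramunt). A `*`-regular ring complete with respect to a rank function
`N` satisfies `LP ∼ RP` if and only if equivalent projections admit `*`-equivalent
subprojections which approximate them arbitrarily well in rank. -/
theorem statement11 (R : Type) [Ring R] [StarRing R]
    (hreg : VNRegular R) (hproper : ProperStar R)
    (N : R → ℝ) (hN : IsRankFunction N) (hcomplete : RankComplete N) :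
    (∀ x e f : R, IsLeftProjOf x e → IsRightProjOf x f → StarEquivProj e f) ↔
      (∀ p q : R, IsProjection p → IsProjection q → EquivProj p q →
        ∀ ε : ℝ, 0 < ε →
          ∃ p' q' : R, IsProjection p' ∧ IsProjection q' ∧
            ProjLE p' p ∧ ProjLE q' q ∧ StarEquivProj p' q' ∧
            N (p - p') < ε ∧ N (q - q') < ε) := by
  constructor
  · rintro hLR p q hp hq ⟨x, y, hx, -, hxy, hyx⟩ ε hε
    have hpx : p * x = x := by rw [hx, ← mul_assoc, ← mul_assoc, hp.2]
    have hxq : x * q = x := by rw [hx, mul_assoc, hq.2]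
    refine ⟨p, q, hp, hq, .refl hp, .refl hq, hLR x p q ⟨hp, hpx, y, hxy⟩ ⟨hq, hxq, y, hyx⟩,
      ?_, ?_⟩ <;> simpa [hN.1.map_zero] using hε
  · intro happrox x e f he hf
    exact starEquivProj_of_equivProj hreg hproper hN hcomplete happrox he.1 hf.1
      (equivProj_of_isLeftProjOf_of_isRightProjOf hreg he hf)

end AraClaramunt
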